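/- arXiv:2408.08449 — 3 statements merged into one kernel-verified Lean document; each statement's English description precedes it below -/
import Mathlib

section
/- MIR cut validity (disaggregated form): let $x \in \mathbb{Z}^n$, $v \in \mathbb{R}^p$ with $x, v \ge 0$ satisfy $c v + a x \ge \beta$ where $c \in \mathbb{R}^p$, $a \in \mathbb{R}^n$, $\beta \in \mathbb{R}$. Suppose $c^+ \in \mathbb{R}^p$, $\hat{\alpha} \in \mathbb{R}^n$, $\bar{\alpha} \in \mathbb{Z}^n$, $\hat{\beta} \in \mathbb{R}$, $\bar{\beta} \in \mathbb{Z}$ satisfy: $c^+ \ge c$, $c^+ \ge 0$, $\hat{\alpha} + \bar{\alpha} \ge a$, $\hat{\beta} + \bar{\beta} \le \beta$, $0 \le \hat{\alpha} \le 1$ componentwise, and $0 \le \hat{\beta} \le 1$. Then $c^+ v + \hat{\alpha} x + \hat{\beta}(\bar{\alpha} x) \ge \hat{\beta}(\bar{\beta} + 1)$. -/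
/-- MIR cut validity (disaggregated form). -/
theorem mir_cut_validity
    (n p : ℕ) (x : Fin n → ℤ) (v : Fin p → ℝ)
    (c : Fin p → ℝ) (a : Fin n → ℝ) (β : ℝ)
    (cpos : Fin p → ℝ) (ahat : Fin n → ℝ) (abar : Fin n → ℤ)
    (bhat : ℝ) (bbar : ℤ)
    (hx : ∀ i, 0 ≤ x i) (hv : ∀ j, 0 ≤ v j)
    (hbase : (∑ j, c j * v j) + (∑ i, a i * (x i : ℝ)) ≥ β)
    (hc1 : ∀ j, cpos j ≥ c j) (hc2 : ∀ j, cpos j ≥ 0)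
    (ha : ∀ i, ahat i + (abar i : ℝ) ≥ a i)
    (hb : bhat + (bbar : ℝ) ≤ β)
    (hahat : ∀ i, 0 ≤ ahat i ∧ ahat i ≤ 1)
    (hbhat : 0 ≤ bhat ∧ bhat ≤ 1) :
    (∑ j, cpos j * v j) + (∑ i, ahat i * (x i : ℝ))
      + bhat * (∑ i, (abar i : ℝ) * (x i : ℝ))
      ≥ bhat * ((bbar : ℝ) + 1) := by
  obtain ⟨hb0, hb1⟩ := hbhat
  set σ : ℝ := (∑ j, cpos j * v j) + (∑ i, ahat i * (x i : ℝ)) with hσdef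
  have hxr : ∀ i, (0:ℝ) ≤ (x i : ℝ) := fun i => by exact_mod_cast hx i
  have hσ0 : 0 ≤ σ := by
    apply add_nonneg
    · exact Finset.sum_nonneg fun j _ => mul_nonneg (hc2 j) (hv j)
    · exact Finset.sum_nonneg fun i _ => mul_nonneg (hahat i).1 (hxr i)
  set kZ : ℤ := ∑ i, abar i * x i with hkdef
  have hK : (∑ i, (abar i : ℝ) * (x i : ℝ)) = (kZ : ℝ) := by
    rw [hkdef]; push_cast; ring
  have hmain : σ + (kZ : ℝ) ≥ bhat + (bbar : ℝ) := by
    have h1 : (∑ j, cpos j * v j) ≥ ∑ j, c j * v j :=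
      Finset.sum_le_sum fun j _ => mul_le_mul_of_nonneg_right (hc1 j) (hv j)
    have h2 : (∑ i, ahat i * (x i : ℝ)) + (∑ i, (abar i : ℝ) * (x i : ℝ))
        ≥ ∑ i, a i * (x i : ℝ) := by
      rw [← Finset.sum_add_distrib]
      exact Finset.sum_le_sum fun i _ => by
        have := mul_le_mul_of_nonneg_right (ha i) (hxr i)
        linarith [this]
    rw [← hK]
    have := hbase
    rw [hσdef]
    linarith
  rw [hK]
  by_cases hcase : kZ ≤ bbar
  · have hkr : (kZ : ℝ) ≤ (bbar : ℝ) := by exact_mod_cast hcase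
    nlinarith [mul_nonneg (sub_nonneg.2 hb1) (sub_nonneg.2 hkr)]
  · have hkr : (bbar : ℝ) + 1 ≤ (kZ : ℝ) := by
      have : bbar + 1 ≤ kZ := by omega
      exact_mod_cast this
    nlinarith [mul_le_mul_of_nonneg_left hkr hb0]
end

section
/- If a feasible solution of MIR-Sep has strictly positive objective value, i.e., $\sum_k \varepsilon_k \Delta_k - (c^+ v^\star + \hat{\alpha} x^\star) > 0$ where $\Delta_k \le \Delta = (\bar{\beta}+1) - \bar{\alpha} x^\star$, $\Delta_k \le \pi_k$, $\hat{\beta} \ge \sum_k \varepsilon_k \pi_k$, and $\varepsilon_k = 2^{-k} > 0$, then the corresponding MIR cut $c^+ v + \hat{\alpha} x + \hat{\beta} \bar{\alpha} x \ge \hat{\beta}(\bar{\beta}+1)$ is violated by the point $(x^\star, v^\star)$: $c^+ v^\star + \hat{\alpha} x^\star + \hat{\beta} \bar{\alpha} x^\star < \hat{\beta}(\bar{\beta}+1)$, provided $0 \le \Delta \le 1$ and at least one $\pi_k = 1$. -/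
/-- A feasible MIR-Sep solution with strictly positive objective value yields
an MIR cut violated by the fractional point `(x⋆, v⋆)`. -/
theorem positive_objective_gives_violated_cut
    (n p K : ℕ)
    (xstar : Fin n → ℝ) (vstar : Fin p → ℝ)
    (cpos : Fin p → ℝ) (ahat : Fin n → ℝ) (abar : Fin n → ℤ)
    (bhat : ℝ) (bbar : ℤ)
    (π : Fin K → ℝ) (Δ : ℝ) (Δk : Fin K → ℝ)
    (hπ : ∀ k, π k = 0 ∨ π k = 1)
    (hΔdef : Δ = ((bbar : ℝ) + 1) - ∑ i, (abar i : ℝ) * xstar i)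
    (hΔk1 : ∀ k, Δk k ≤ Δ) (hΔk2 : ∀ k, Δk k ≤ π k)
    (hbhat : bhat ≥ ∑ k : Fin K, (2 : ℝ) ^ (-((k : ℕ) + 1) : ℤ) * π k)
    (hΔ0 : 0 ≤ Δ) (hΔ1 : Δ ≤ 1)
    (hone : ∃ k, π k = 1)
    (hobj : (∑ k : Fin K, (2 : ℝ) ^ (-((k : ℕ) + 1) : ℤ) * Δk k)
        - ((∑ j, cpos j * vstar j) + (∑ i, ahat i * xstar i)) > 0) :
    (∑ j, cpos j * vstar j) + (∑ i, ahat i * xstar i)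
      + bhat * (∑ i, (abar i : ℝ) * xstar i)
      < bhat * ((bbar : ℝ) + 1) := by
  have h1 : (∑ k : Fin K, (2 : ℝ) ^ (-((k : ℕ) + 1) : ℤ) * Δk k)
      ≤ (∑ k : Fin K, (2 : ℝ) ^ (-((k : ℕ) + 1) : ℤ) * π k) * Δ := by
    rw [Finset.sum_mul]
    apply Finset.sum_le_sum
    intro k _
    have hε : (0 : ℝ) < (2 : ℝ) ^ (-((k : ℕ) + 1) : ℤ) := by positivity
    rcases hπ k with h | h
    · have := hΔk2 k
      rw [h]; nlinarith
    · have := hΔk1 k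
      rw [h]; nlinarith
  have h2 : (∑ k : Fin K, (2 : ℝ) ^ (-((k : ℕ) + 1) : ℤ) * π k) * Δ ≤ bhat * Δ :=
    mul_le_mul_of_nonneg_right hbhat hΔ0
  rw [hΔdef] at h1 h2
  linarith
end

section
/- Key rounding step in the MIR validity proof: let $w \in \mathbb{R}_{\ge 0}$, $t \in \mathbb{Z}$, and $0 \le \hat{\beta} \le 1$ be such that $w + t \ge \hat{\beta} + \bar{\beta}$ with $\bar{\beta} \in \mathbb{Z}$. Then $w + \hat{\beta} t \ge \hat{\beta}(\bar{\beta} + 1)$. -/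
/-- Key rounding step in the MIR validity proof. -/
theorem mir_rounding_step
    (w : ℝ) (t : ℤ) (bhat : ℝ) (bbar : ℤ)
    (hw : 0 ≤ w) (h0 : 0 ≤ bhat) (h1 : bhat ≤ 1)
    (hbase : w + (t : ℝ) ≥ bhat + (bbar : ℝ)) :
    w + bhat * (t : ℝ) ≥ bhat * ((bbar : ℝ) + 1) := by
  rcases le_or_gt t bbar with h | h
  · have h' : (t : ℝ) ≤ (bbar : ℝ) := by exact_mod_cast h
    nlinarith [mul_nonneg h0 (sub_nonneg.2 h')]
  · have h' : (bbar : ℝ) + 1 ≤ (t : ℝ) := by exact_mod_cast h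
    nlinarith [mul_nonneg h0 (sub_nonneg.2 h')]
end
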